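/- For every 0 ≤ ε ≤ 1/2 and every function h : {0,1}^n → {0,1}, one has E_{(x,y)_ε}[h(x)h(y)] ≤ ( E_x[h(x)] )^{1/(1-ε)}, where the expectation E_x is over a uniform x ∈ {0,1}^n. -/

import Mathlib

/-- The weight of a pair `(x, y)` under the distribution `(x,y)_ε`. -/
noncomputable def pairWeight (ε : ℝ) {n : ℕ} (x y : Fin n → Bool) : ℝ :=
  ∏ i, if x i = y i then (1 - ε) / 2 else ε / 2

/-- `E_{(x,y)_ε}[F x y]`. -/
noncomputable def expPair (ε : ℝ) {n : ℕ}
    (F : (Fin n → Bool) → (Fin n → Bool) → ℝ) : ℝ :=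
  ∑ x : Fin n → Bool, ∑ y : Fin n → Bool, pairWeight ε x y * F x y

/-- A `{0,1}`-valued function on `{0,1}^n`, viewed as real-valued. -/
noncomputable def boolToReal {n : ℕ} (h : (Fin n → Bool) → Bool)
    (x : Fin n → Bool) : ℝ :=
  if h x then 1 else 0

/-!
Induct on `n`, splitting `f` into its two halves `f₀, f₁` along the first coordinate. The form
`B(f, g) = E_{(x,y)_ε}[f(x) g(y)]` is positive semidefinite, so Cauchy–Schwarz bounds the cross
term `B(f₀, f₁)` by `√(B(f₀, f₀) B(f₁, f₁))`, and with `p = 1/(1-ε)` the induction closes by the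
two-point inequality `(1-ε)/2 (a^p + b^p) + ε √(a^p b^p) ≤ ((a+b)/2)^p`. Writing `a = e^(m+s)`,
`b = e^(m-s)` turns it into `cosh(ps) + p - 1 ≤ p cosh(s)^p`, which holds because
`(cosh(ps) + p - 1) / cosh(s)^p` decreases on `s ≥ 0`: its derivative has the sign of
`sinh((p-1)s) - (p-1) sinh s ≤ 0`, by convexity of `sinh`. The argument works for all `[0,1]`-valued
`f`, the base case being `f² ≤ f^p`.
-/

open Real

lemma sinh_mul_le_mul_sinh {q s : ℝ} (hq0 : 0 ≤ q) (hq1 : q ≤ 1) (hs : 0 ≤ s) :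
    sinh (q * s) ≤ q * sinh s := by
  have hconv : ConvexOn ℝ (Set.Ici 0) sinh := by
    refine MonotoneOn.convexOn_of_deriv (convex_Ici 0) continuous_sinh.continuousOn
      differentiable_sinh.differentiableOn ?_
    rw [Real.deriv_sinh, interior_Ici]
    intro x hx y hy hxy
    rw [cosh_le_cosh, abs_of_pos hx, abs_of_pos hy]
    exact hxy
  simpa using hconv.2 hs Set.self_mem_Ici hq0 (sub_nonneg.2 hq1) (add_sub_cancel q 1)

lemma cosh_mul_add_le_mul_cosh_rpow {p : ℝ} (hp1 : 1 ≤ p) (hp2 : p ≤ 2) (s : ℝ) :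
    cosh (p * s) + (p - 1) ≤ p * cosh s ^ p := by
  wlog hs : 0 ≤ s generalizing s
  · simpa [mul_neg, cosh_neg] using this (-s) (by linarith)
  set G : ℝ → ℝ := fun s => (cosh (p * s) + (p - 1)) * cosh s ^ (-p)
  have hG : ∀ s, HasDerivAt G
      (p * cosh s ^ (-p - 1) * (sinh ((p - 1) * s) - (p - 1) * sinh s)) s := by
    intro s
    have hc : cosh s ≠ 0 := (cosh_pos s).ne'
    have h1 : HasDerivAt (fun s => cosh (p * s) + (p - 1)) (sinh (p * s) * p) s := by
      simpa using (((hasDerivAt_id s).const_mul p).cosh).add_const (p - 1)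
    refine (h1.mul ((hasDerivAt_cosh s).rpow_const (p := -p) (Or.inl hc))).congr_deriv ?_
    have e : cosh s ^ (-p) = cosh s ^ (-p - 1) * cosh s := by
      rw [← rpow_add_one hc]; ring_nf
    rw [e, show (p - 1) * s = p * s - s by ring, sinh_sub]
    ring
  have hanti : AntitoneOn G (Set.Ici 0) := by
    refine antitoneOn_of_hasDerivWithinAt_nonpos (convex_Ici 0)
      (fun x _ => (hG x).continuousAt.continuousWithinAt)
      (fun x _ => (hG x).hasDerivWithinAt) fun x hx => ?_
    rw [interior_Ici] at hx
    have hq := sinh_mul_le_mul_sinh (q := p - 1) (by linarith) (by linarith) (le_of_lt hx)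
    have hw : 0 ≤ p * cosh x ^ (-p - 1) := by positivity
    exact mul_nonpos_of_nonneg_of_nonpos hw (by linarith)
  have hGs : G s ≤ p := by simpa [G] using hanti Set.self_mem_Ici hs hs
  have hcp := rpow_pos_of_pos (cosh_pos s) p
  simp only [G, rpow_neg (cosh_pos s).le] at hGs
  rwa [← div_eq_mul_inv, div_le_iff₀ hcp] at hGs

lemma two_rpow_le_two_mul {p : ℝ} (hp1 : 1 ≤ p) (hp2 : p ≤ 2) : (2 : ℝ) ^ p ≤ 2 * p := by
  have h := rpow_one_add_le_one_add_mul_self (s := 1) (by norm_num) (p := p - 1)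
    (by linarith) (by linarith)
  rw [show (1 : ℝ) + 1 = 2 by norm_num, rpow_sub_one two_ne_zero] at h
  linarith

lemma rpow_div_two_le {p a : ℝ} (hp1 : 1 ≤ p) (hp2 : p ≤ 2) (ha : 0 ≤ a) :
    a ^ p / 2 ≤ p * (a / 2) ^ p := by
  have h2 := two_rpow_le_two_mul hp1 hp2
  have h2p : (0 : ℝ) < 2 ^ p := by positivity
  rw [div_rpow ha zero_le_two, mul_div_assoc', div_le_div_iff₀ zero_lt_two h2p]
  nlinarith [rpow_nonneg ha p]

lemma exp_rpow_add_rpow_add_sqrt_le {p : ℝ} (hp1 : 1 ≤ p) (hp2 : p ≤ 2) (m s : ℝ) :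
    (exp (m + s) ^ p + exp (m - s) ^ p) / 2 + (p - 1) * √(exp (m + s) ^ p * exp (m - s) ^ p)
      ≤ p * ((exp (m + s) + exp (m - s)) / 2) ^ p := by
  have hmean : (exp (m + s) + exp (m - s)) / 2 = exp m * cosh s := by
    rw [cosh_eq, exp_add, exp_sub, exp_neg]; field_simp
  have hsum : (exp (m + s) ^ p + exp (m - s) ^ p) / 2 = exp (m * p) * cosh (p * s) := by
    rw [cosh_eq, ← exp_mul, ← exp_mul, mul_div_assoc', mul_add, ← exp_add, ← exp_add]; ring_nf
  have hprod : exp (m + s) ^ p * exp (m - s) ^ p = exp (m * p) * exp (m * p) := by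
    rw [← exp_mul, ← exp_mul, ← exp_add, ← exp_add]; ring_nf
  rw [hmean, hsum, hprod, sqrt_mul_self (exp_pos _).le,
    mul_rpow (exp_pos m).le (cosh_pos s).le, ← exp_mul]
  nlinarith [mul_le_mul_of_nonneg_left (cosh_mul_add_le_mul_cosh_rpow hp1 hp2 s)
    (exp_pos (m * p)).le]

lemma rpow_add_rpow_add_sqrt_le {p a b : ℝ} (hp1 : 1 ≤ p) (hp2 : p ≤ 2) (ha : 0 ≤ a)
    (hb : 0 ≤ b) :
    (a ^ p + b ^ p) / 2 + (p - 1) * √(a ^ p * b ^ p) ≤ p * ((a + b) / 2) ^ p := by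
  have hp0 : p ≠ 0 := by positivity
  rcases hb.eq_or_lt with rfl | hb
  · simpa [zero_rpow hp0] using rpow_div_two_le hp1 hp2 ha
  rcases ha.eq_or_lt with rfl | ha
  · simpa [zero_rpow hp0] using rpow_div_two_le hp1 hp2 hb.le
  have h := exp_rpow_add_rpow_add_sqrt_le hp1 hp2 ((log a + log b) / 2) ((log a - log b) / 2)
  rwa [show (log a + log b) / 2 + (log a - log b) / 2 = log a by ring,
    show (log a + log b) / 2 - (log a - log b) / 2 = log b by ring, exp_log ha, exp_log hb] at h

lemma sum_pi_fin_succ {α M : Type*} [Fintype α] [AddCommMonoid M] {n : ℕ}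
    (F : (Fin (n + 1) → α) → M) :
    ∑ z, F z = ∑ a, ∑ x, F (Fin.cons a x) :=
  (Fintype.sum_equiv (Fin.consEquiv fun _ => α) _ F fun _ => rfl).symm.trans
    (Fintype.sum_prod_type _)

lemma pairWeight_comm (ε : ℝ) {n : ℕ} (x y : Fin n → Bool) :
    pairWeight ε x y = pairWeight ε y x := by
  simp only [pairWeight, eq_comm]

lemma pairWeight_cons (ε : ℝ) {n : ℕ} (a b : Bool) (x y : Fin n → Bool) :
    pairWeight ε (Fin.cons a x) (Fin.cons b y) =
      (if a = b then (1 - ε) / 2 else ε / 2) * pairWeight ε x y := by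
  simp [pairWeight, Fin.prod_univ_succ]

lemma expPair_succ (ε : ℝ) {n : ℕ} (F : (Fin (n + 1) → Bool) → (Fin (n + 1) → Bool) → ℝ) :
    expPair ε F = ∑ a, ∑ b, (if a = b then (1 - ε) / 2 else ε / 2) *
      expPair ε fun x y => F (Fin.cons a x) (Fin.cons b y) := by
  simp only [expPair, sum_pi_fin_succ, pairWeight_cons, Finset.mul_sum, mul_assoc]
  refine Finset.sum_congr rfl fun a _ => ?_
  rw [Finset.sum_comm]

noncomputable def noiseForm (ε : ℝ) (n : ℕ) : LinearMap.BilinForm ℝ ((Fin n → Bool) → ℝ) :=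
  Matrix.toBilin' (Matrix.of fun x y => pairWeight ε x y)

lemma noiseForm_apply (ε : ℝ) {n : ℕ} (f g : (Fin n → Bool) → ℝ) :
    noiseForm ε n f g = expPair ε fun x y => f x * g y := by
  simp only [noiseForm, Matrix.toBilin'_apply, Matrix.of_apply, expPair]
  exact Finset.sum_congr rfl fun x _ => Finset.sum_congr rfl fun y _ => by ring

lemma noiseForm_isSymm (ε : ℝ) (n : ℕ) : LinearMap.IsSymm (noiseForm ε n) :=
  LinearMap.BilinForm.isSymm_iff.1 <| Matrix.isSymm_toBilin'_iff_isSymm.2 <|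
    Matrix.ext fun x y => pairWeight_comm ε y x

lemma noiseForm_zero (ε : ℝ) (f g : (Fin 0 → Bool) → ℝ) (x : Fin 0 → Bool) :
    noiseForm ε 0 f g = f x * g x := by
  simp only [noiseForm_apply, expPair, pairWeight, Fintype.sum_subsingleton _ x,
    Finset.univ_eq_empty, Finset.prod_empty, one_mul]

def fixFirst {n : ℕ} {β : Type*} (f : (Fin (n + 1) → Bool) → β) (a : Bool) : (Fin n → Bool) → β :=
  fun x => f (Fin.cons a x)

lemma noiseForm_succ (ε : ℝ) {n : ℕ} (f g : (Fin (n + 1) → Bool) → ℝ) :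
    noiseForm ε (n + 1) f g =
      (1 - ε) / 2 * (noiseForm ε n (fixFirst f false) (fixFirst g false) +
          noiseForm ε n (fixFirst f true) (fixFirst g true)) +
        ε / 2 * (noiseForm ε n (fixFirst f false) (fixFirst g true) +
          noiseForm ε n (fixFirst f true) (fixFirst g false)) := by
  simp only [noiseForm_apply, expPair_succ (F := fun x y => f x * g y), Fintype.sum_bool,
    Bool.true_eq_false, Bool.false_eq_true, if_true, if_false, fixFirst]
  ring

lemma noiseForm_self_nonneg {ε : ℝ} (hε : ε ≤ 1 / 2) {n : ℕ} (f : (Fin n → Bool) → ℝ) :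
    0 ≤ noiseForm ε n f f := by
  induction n with
  | zero => simpa [noiseForm_zero _ _ _ Fin.elim0] using mul_self_nonneg (f Fin.elim0)
  | succ n ih =>
    have hplus := ih (fixFirst f false + fixFirst f true)
    have hminus := ih (fixFirst f false - fixFirst f true)
    simp only [map_add, map_sub, LinearMap.add_apply, LinearMap.sub_apply] at hplus hminus
    rw [noiseForm_succ]
    -- `B(f, f) = B(f₀ + f₁, f₀ + f₁) / 4 + (1 - 2ε) / 4 * B(f₀ - f₁, f₀ - f₁)`
    nlinarith [mul_nonneg (by linarith : (0 : ℝ) ≤ 1 - 2 * ε) hminus]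

lemma noiseForm_succ_self_le {ε : ℝ} (hε0 : 0 ≤ ε) (hε1 : ε ≤ 1 / 2) {n : ℕ}
    (f : (Fin (n + 1) → Bool) → ℝ) :
    noiseForm ε (n + 1) f f ≤
      (1 - ε) / 2 * (noiseForm ε n (fixFirst f false) (fixFirst f false) +
          noiseForm ε n (fixFirst f true) (fixFirst f true)) +
        ε * √(noiseForm ε n (fixFirst f false) (fixFirst f false) *
          noiseForm ε n (fixFirst f true) (fixFirst f true)) := by
  have hsymm := noiseForm_isSymm ε n
  have hcs := LinearMap.BilinForm.apply_sq_le_of_symm _ (noiseForm_self_nonneg hε1) hsymm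
    (fixFirst f false) (fixFirst f true)
  have hcross := (le_abs_self _).trans (abs_le_sqrt hcs)
  rw [noiseForm_succ, ← hsymm.eq (fixFirst f false) (fixFirst f true),
    RingHom.id_apply]
  nlinarith [mul_le_mul_of_nonneg_left hcross hε0]

lemma noiseForm_self_le_mean_rpow {ε : ℝ} (hε0 : 0 ≤ ε) (hε1 : ε ≤ 1 / 2) {n : ℕ}
    (f : (Fin n → Bool) → ℝ) (hf0 : ∀ x, 0 ≤ f x) (hf1 : ∀ x, f x ≤ 1) :
    noiseForm ε n f f ≤ ((∑ x, f x) / 2 ^ n) ^ ((1 : ℝ) / (1 - ε)) := by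
  set p : ℝ := 1 / (1 - ε) with hp
  have hε' : 0 < 1 - ε := by linarith
  have hp1 : 1 ≤ p := by rw [hp, le_div_iff₀ hε']; linarith
  have hp2 : p ≤ 2 := by rw [hp, div_le_iff₀ hε']; linarith
  have hεp : (1 - ε) * p = 1 := by rw [hp]; field_simp
  induction n with
  | zero =>
    rw [noiseForm_zero _ _ _ Fin.elim0, Fintype.sum_subsingleton _ Fin.elim0, pow_zero, div_one,
      ← sq, ← rpow_two]
    exact rpow_le_rpow_of_exponent_ge' (hf0 _) (hf1 _) (by linarith) hp2
  | succ n ih =>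
    set A : Bool → ℝ := fun a => (∑ x, fixFirst f a x) / 2 ^ n
    have hA : ∀ a, 0 ≤ A a := fun a =>
      div_nonneg (Finset.sum_nonneg fun x _ => hf0 _) (by positivity)
    have hmean : (∑ x, f x) / 2 ^ (n + 1) = (A false + A true) / 2 := by
      simp only [A, sum_pi_fin_succ f, Fintype.sum_bool, fixFirst, pow_succ]; ring
    have hB := fun a => ih (fixFirst f a) (fun x => hf0 _) (fun x => hf1 _)
    have hB0 := fun a => noiseForm_self_nonneg hε1 (fixFirst f a)
    calc noiseForm ε (n + 1) f f
        ≤ (1 - ε) / 2 * (A false ^ p + A true ^ p) + ε * √(A false ^ p * A true ^ p) := by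
          refine (noiseForm_succ_self_le hε0 hε1 f).trans ?_
          gcongr
          exacts [hB false, hB true, hB0 true, rpow_nonneg (hA false) p, hB false, hB true]
      _ = (1 - ε) * ((A false ^ p + A true ^ p) / 2 + (p - 1) * √(A false ^ p * A true ^ p)) := by
          linear_combination (-√(A false ^ p * A true ^ p)) * hεp
      _ ≤ (1 - ε) * (p * ((A false + A true) / 2) ^ p) := by
          gcongr; exact rpow_add_rpow_add_sqrt_le hp1 hp2 (hA false) (hA true)
      _ = ((∑ x, f x) / 2 ^ (n + 1)) ^ p := by
          rw [hmean, ← mul_assoc, hεp, one_mul]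

theorem stmt4 {n : ℕ} (ε : ℝ) (hε0 : 0 ≤ ε) (hε1 : ε ≤ 1 / 2)
    (h : (Fin n → Bool) → Bool) :
    expPair ε (fun x y => boolToReal h x * boolToReal h y) ≤
      ((∑ x : Fin n → Bool, boolToReal h x) / 2 ^ n) ^ ((1 : ℝ) / (1 - ε)) := by
  have hbool : ∀ x, 0 ≤ boolToReal h x ∧ boolToReal h x ≤ 1 := fun x => by
    unfold boolToReal; split_ifs <;> norm_num
  rw [← noiseForm_apply]
  exact noiseForm_self_le_mean_rpow hε0 hε1 _ (fun x => (hbool x).1) (fun x => (hbool x).2)
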